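/- For every integer d ≥ 0, the set △_d equals φ₁^d φ₀(△̄ ∖ Σ), the image of △̄ ∖ Σ under d applications of φ₁ following one application of φ₀. -/

import Mathlib

noncomputable def phi0 (p : ℝ × ℝ) : ℝ × ℝ := (1 / (1 + p.2), p.1 / (1 + p.2))
noncomputable def phi1 (p : ℝ × ℝ) : ℝ × ℝ := (p.1 / (1 + p.2), p.2 / (1 + p.2))

/-- The open triangle △ = {(x,y) : 1 ≥ x ≥ y > 0}. -/
def tri : Set (ℝ × ℝ) := {p | 1 ≥ p.1 ∧ p.1 ≥ p.2 ∧ p.2 > 0}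

/-- The subtriangle △_d. -/
def triK (d : ℕ) : Set (ℝ × ℝ) :=
  {p | p ∈ tri ∧ 1 - p.1 - (d : ℝ) * p.2 ≥ 0 ∧ 1 - p.1 - ((d : ℝ) + 1) * p.2 < 0}

/-- Σ = △̄ ∩ {x = y}. -/
def SigmaSet : Set (ℝ × ℝ) := closure tri ∩ {p | p.1 = p.2}

/-!
Both maps are inverted explicitly: `phi0` carries the closed triangle minus its diagonal onto `△₀`
with inverse `(X, Y) ↦ (Y / X, (1 - X) / X)`, and `phi1` carries `△_d` onto `△_{d+1}` with inverse
`(X, Y) ↦ (X / (1 - Y), Y / (1 - Y))`, because `1 - X - (c + 1) Y = (1 - x - c y) / (1 + y)` for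
`(X, Y) = phi1 (x, y)`.
-/

open Set

theorem closure_tri : closure tri = {p : ℝ × ℝ | p.1 ≤ 1 ∧ p.2 ≤ p.1 ∧ 0 ≤ p.2} := by
  refine subset_antisymm (closure_minimal (fun p ⟨h₁, h₂, h₃⟩ => ⟨h₁, h₂, h₃.le⟩) ?_) ?_
  · exact (isClosed_le continuous_fst continuous_const).inter
      ((isClosed_le continuous_snd continuous_fst).inter
        (isClosed_le continuous_const continuous_snd))
  · rintro p ⟨h₁, h₂, h₃⟩
    have hseg : openSegment ℝ p (1, 1) ⊆ tri := by
      rintro _ ⟨a, b, ha, hb, hab, rfl⟩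
      refine ⟨?_, ?_, ?_⟩ <;> simp <;> nlinarith
    exact closure_mono hseg (segment_subset_closure_openSegment (left_mem_segment ℝ p (1, 1)))

theorem closure_tri_diff_sigmaSet :
    closure tri \ SigmaSet = {p : ℝ × ℝ | p.1 ≤ 1 ∧ p.2 < p.1 ∧ 0 ≤ p.2} := by
  ext p
  rw [SigmaSet, sdiff_self_inter, closure_tri]
  simp only [mem_sdiff, mem_ofPred_eq, lt_iff_le_and_ne, ne_comm (a := p.2)]
  tauto

noncomputable def phi0Inv (p : ℝ × ℝ) : ℝ × ℝ := (p.2 / p.1, (1 - p.1) / p.1)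
noncomputable def phi1Inv (p : ℝ × ℝ) : ℝ × ℝ := (p.1 / (1 - p.2), p.2 / (1 - p.2))

theorem phi0_phi0Inv {p : ℝ × ℝ} (hp : p.1 ≠ 0) : phi0 (phi0Inv p) = p := by
  have : 1 + (1 - p.1) / p.1 = 1 / p.1 := by field_simp; ring
  ext <;> simp [phi0, phi0Inv, this, hp]

theorem phi1_phi1Inv {p : ℝ × ℝ} (hp : p.2 ≠ 1) : phi1 (phi1Inv p) = p := by
  have : 1 + p.2 / (1 - p.2) = 1 / (1 - p.2) := by field_simp [sub_ne_zero.2 hp.symm]; ring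
  ext <;> simp [phi1, phi1Inv, this, sub_ne_zero.2 hp.symm]

theorem mapsTo_phi0 : MapsTo phi0 {p | p.1 ≤ 1 ∧ p.2 < p.1 ∧ 0 ≤ p.2} (triK 0) := by
  rintro ⟨x, y⟩ ⟨h₁ : x ≤ 1, h₂ : y < x, h₃ : 0 ≤ y⟩
  have : 0 < 1 + y := by linarith
  simp only [triK, tri, phi0, mem_ofPred_eq, Nat.cast_zero]
  refine ⟨⟨?_, ?_, ?_⟩, ?_, ?_⟩ <;> field_simp <;> linarith

theorem mapsTo_phi1 (d : ℕ) : MapsTo phi1 (triK d) (triK (d + 1)) := by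
  rintro ⟨x, y⟩ ⟨⟨h₁ : 1 ≥ x, h₂ : x ≥ y, h₃ : y > 0⟩, h₄ : 1 - x - d * y ≥ 0,
    h₅ : 1 - x - (d + 1) * y < 0⟩
  have : 0 < 1 + y := by linarith
  simp only [triK, tri, phi1, mem_ofPred_eq]
  push_cast
  refine ⟨⟨?_, ?_, ?_⟩, ?_, ?_⟩ <;> field_simp <;> linarith

theorem mapsTo_phi0Inv : MapsTo phi0Inv (triK 0) {p | p.1 ≤ 1 ∧ p.2 < p.1 ∧ 0 ≤ p.2} := by
  rintro ⟨x, y⟩ ⟨⟨h₁ : 1 ≥ x, h₂ : x ≥ y, h₃ : y > 0⟩, h₄ : 1 - x - (0 : ℕ) * y ≥ 0,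
    h₅ : 1 - x - ((0 : ℕ) + 1) * y < 0⟩
  have : 0 < x := by linarith
  simp only [phi0Inv, mem_ofPred_eq]
  push_cast at h₄ h₅
  refine ⟨?_, ?_, ?_⟩ <;> field_simp <;> linarith

theorem snd_lt_one_of_mem_triK_succ {d : ℕ} {p : ℝ × ℝ} (hp : p ∈ triK (d + 1)) : p.2 < 1 := by
  obtain ⟨⟨-, h₂, h₃⟩, h₄, -⟩ := hp
  push_cast at h₄
  have : 0 ≤ (d : ℝ) * p.2 := by positivity
  linarith

theorem mapsTo_phi1Inv (d : ℕ) : MapsTo phi1Inv (triK (d + 1)) (triK d) := by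
  intro p hp
  have hy : 0 < 1 - p.2 := sub_pos.2 (snd_lt_one_of_mem_triK_succ hp)
  obtain ⟨x, y⟩ := p
  obtain ⟨⟨h₁ : 1 ≥ x, h₂ : x ≥ y, h₃ : y > 0⟩, h₄ : 1 - x - ((d + 1 : ℕ) : ℝ) * y ≥ 0,
    h₅ : 1 - x - (((d + 1 : ℕ) : ℝ) + 1) * y < 0⟩ := hp
  push_cast at h₄ h₅
  have hdy : 0 ≤ (d : ℝ) * y := by positivity
  simp only [triK, tri, phi1Inv, mem_ofPred_eq]
  refine ⟨⟨?_, ?_, ?_⟩, ?_, ?_⟩ <;> field_simp <;> linarith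

theorem image_phi0 : phi0 '' (closure tri \ SigmaSet) = triK 0 := by
  rw [closure_tri_diff_sigmaSet]
  refine SurjOn.image_eq_of_mapsTo (RightInvOn.surjOn (fun p hp => ?_) mapsTo_phi0Inv) mapsTo_phi0
  exact phi0_phi0Inv (hp.1.2.2.trans_le hp.1.2.1).ne'

theorem image_phi1 (d : ℕ) : phi1 '' triK d = triK (d + 1) := by
  refine SurjOn.image_eq_of_mapsTo (RightInvOn.surjOn (fun p hp => ?_) (mapsTo_phi1Inv d))
    (mapsTo_phi1 d)
  exact phi1_phi1Inv (snd_lt_one_of_mem_triK_succ hp).ne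

/-- △_d = φ₁^d φ₀ (△̄ ∖ Σ) for every integer d ≥ 0. -/
theorem triK_eq_image (d : ℕ) :
    triK d = (phi1^[d] ∘ phi0) '' (closure tri \ SigmaSet) := by
  induction d with
  | zero => exact image_phi0.symm
  | succ d ih => rw [Function.iterate_succ', Function.comp_assoc, image_comp, ← ih, image_phi1]
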